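/- Let V be a finite-dimensional real vector space and L ⊆ 𝕋_ℂV a lagrangian subspace. With K := (L ∩ L̄) ∩ 𝕋V, K^⊥ its orthogonal in 𝕋V, E := pr_{V_ℂ}(L), ε ∈ Λ²E* the unique form with L = L(E,ε), Δ := (E ∩ Ē) ∩ V, D := (E + Ē) ∩ V, ω_Δ := Im(ε|_{Δ×Δ}), and Δ₀ := {X ∈ Δ : ω_Δ(X,·) = 0}, the following hold: pr_V(K^⊥) = D and pr_V(K) = Δ₀, where pr_V : 𝕋V → V is the projection. -/

import Mathlib

open TensorProduct Module

noncomputable section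

namespace CDirac


/-- The real generalized tangent space `V ⊕ V*`. -/
abbrev TR (V : Type*) [AddCommGroup V] [Module ℝ V] := V × (V →ₗ[ℝ] ℝ)

variable {V : Type*} [AddCommGroup V] [Module ℝ V]

/-- The canonical pairing `⟨X+ξ, Y+η⟩ = (η X + ξ Y)/2` on `𝕋V`. -/
def pairR (a b : TR V) : ℝ := (b.2 a.1 + a.2 b.1) / 2

lemma pairR_add_left (a a' b : TR V) : pairR (a + a') b = pairR a b + pairR a' b := by
  simp only [pairR, Prod.fst_add, Prod.snd_add, map_add, LinearMap.add_apply]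
  ring

lemma pairR_smul_left (c : ℝ) (a b : TR V) : pairR (c • a) b = c * pairR a b := by
  simp only [pairR, Prod.smul_fst, Prod.smul_snd, map_smul, LinearMap.smul_apply,
    smul_eq_mul]
  ring

/-- Orthogonal complement with respect to the pairing on `𝕋V`. -/
def orthR (L : Submodule ℝ (TR V)) : Submodule ℝ (TR V) where
  carrier := {a | ∀ b ∈ L, pairR a b = 0}
  zero_mem' := fun b _ => by simp [pairR]
  add_mem' := fun {a a'} ha ha' b hb => by
    rw [pairR_add_left, ha b hb, ha' b hb, add_zero]
  smul_mem' := fun c a ha b hb => by rw [pairR_smul_left, ha b hb, mul_zero]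

/-- A real lagrangian subspace: `L = L^⊥`. -/
def IsLagrangianR (L : Submodule ℝ (TR V)) : Prop := L = orthR L

/-- An isotropic subspace of `𝕋V`. -/
def IsIsotropicR (K : Submodule ℝ (TR V)) : Prop := ∀ a ∈ K, ∀ b ∈ K, pairR a b = 0

/-- The quotient `K^⊥/K`. -/
abbrev quotK (K : Submodule ℝ (TR V)) :=
  @HasQuotient.Quotient ↥(orthR K) _ Submodule.hasQuotient (K.comap (orthR K).subtype)

/-- The quotient map `K^⊥ → K^⊥/K`. -/
def mkK (K : Submodule ℝ (TR V)) : ↥(orthR K) →ₗ[ℝ] quotK K :=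
  (Submodule.mkQ (R := ℝ) (M := ↥(orthR K)) (K.comap (orthR K).subtype) :)




/-- The complexification `V_ℂ = ℂ ⊗_ℝ V`. -/
abbrev Cx (V : Type*) [AddCommGroup V] [Module ℝ V] := ℂ ⊗[ℝ] V

/-- The complex dual `(V_ℂ)^*`. -/
abbrev DualC (V : Type*) [AddCommGroup V] [Module ℝ V] := Cx V →ₗ[ℂ] ℂ

/-- The complexified generalized tangent space `𝕋_ℂ V = V_ℂ ⊕ (V_ℂ)^*`. -/
abbrev TCx (V : Type*) [AddCommGroup V] [Module ℝ V] := Cx V × DualC V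

/-- The ℂ-bilinear pairing on `𝕋_ℂ V`. -/
def pairC (a b : TCx V) : ℂ := (b.2 a.1 + a.2 b.1) / 2

lemma pairC_add_left (a a' b : TCx V) : pairC (a + a') b = pairC a b + pairC a' b := by
  simp only [pairC, Prod.fst_add, Prod.snd_add, map_add, LinearMap.add_apply]
  ring

lemma pairC_smul_left (c : ℂ) (a b : TCx V) : pairC (c • a) b = c * pairC a b := by
  simp only [pairC, Prod.smul_fst, Prod.smul_snd, map_smul, LinearMap.smul_apply,
    smul_eq_mul]
  ring

/-- Orthogonal complement with respect to the ℂ-bilinear pairing on `𝕋_ℂ V`. -/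
def orthC (L : Submodule ℂ (TCx V)) : Submodule ℂ (TCx V) where
  carrier := {a | ∀ b ∈ L, pairC a b = 0}
  zero_mem' := fun b _ => by simp [pairC]
  add_mem' := fun {a a'} ha ha' b hb => by
    rw [pairC_add_left, ha b hb, ha' b hb, add_zero]
  smul_mem' := fun c a ha b hb => by rw [pairC_smul_left, ha b hb, mul_zero]

/-- A complex lagrangian subspace: `L = L^⊥`. -/
def IsLagrangianC (L : Submodule ℂ (TCx V)) : Prop := L = orthC L

private lemma conjCxAux_smul (z : ℂ) (x : Cx V) :
    TensorProduct.map Complex.conjAe.toLinearMap LinearMap.id (z • x) =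
      starRingEnd ℂ z • TensorProduct.map Complex.conjAe.toLinearMap LinearMap.id x := by
  induction x using TensorProduct.induction_on with
  | zero => simp
  | tmul w v => simp [smul_tmul', smul_eq_mul, Complex.conjAe_coe, map_mul]
  | add x y hx hy => simp only [smul_add, map_add, hx, hy]

/-- Conjugation on `V_ℂ`, as a `conj`-semilinear map. -/
def conjCx : Cx V →ₛₗ[starRingEnd ℂ] Cx V where
  toFun := TensorProduct.map Complex.conjAe.toLinearMap LinearMap.id
  map_add' := map_add _
  map_smul' := conjCxAux_smul

lemma conjCx_smul (z : ℂ) (x : Cx V) :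
    conjCx (z • x) = starRingEnd ℂ z • conjCx x := conjCxAux_smul z x

/-- Conjugation of a complex linear functional. -/
def conjDualFun (ξ : DualC V) : DualC V where
  toFun x := starRingEnd ℂ (ξ (conjCx x))
  map_add' x y := by simp
  map_smul' z x := by
    rw [conjCx_smul, map_smul, smul_eq_mul, map_mul, RingHom.id_apply]
    simp [smul_eq_mul]

/-- Conjugation on `(V_ℂ)^*`, as a `conj`-semilinear map. -/
def conjDual : DualC V →ₛₗ[starRingEnd ℂ] DualC V where
  toFun := conjDualFun
  map_add' ξ η := by ext x; simp [conjDualFun]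
  map_smul' z ξ := by
    ext x
    simp [conjDualFun, smul_eq_mul, map_mul]

/-- Conjugation on `𝕋_ℂ V`, as a `conj`-semilinear map. -/
def conjT : TCx V →ₛₗ[starRingEnd ℂ] TCx V where
  toFun a := (conjCx a.1, conjDual a.2)
  map_add' a b := by simp [Prod.ext_iff]
  map_smul' z a := by
    simp [Prod.ext_iff, Prod.smul_fst, Prod.smul_snd, map_smulₛₗ]

instance : RingHomSurjective (starRingEnd ℂ) :=
  ⟨fun z => ⟨starRingEnd ℂ z, by simp⟩⟩

/-- The conjugate `L̄` of a ℂ-subspace of `𝕋_ℂ V`. -/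
def conjSub (L : Submodule ℂ (TCx V)) : Submodule ℂ (TCx V) := L.map conjT

/-- The conjugate `Ē` of a ℂ-subspace of `V_ℂ`. -/
def conjE (E : Submodule ℂ (Cx V)) : Submodule ℂ (Cx V) := E.map conjCx

/-- The canonical inclusion `V → V_ℂ`, `v ↦ 1 ⊗ v`. -/
def iV : V →ₗ[ℝ] Cx V := TensorProduct.mk ℝ ℂ V 1





/-- ℝ-linear auxiliary version of the ℂ-linear extension of a real functional. -/
def dualExtAux (α : V →ₗ[ℝ] ℝ) : Cx V →ₗ[ℝ] ℂ :=
  TensorProduct.lift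
    (LinearMap.mk₂ ℝ (fun z v => z * (α v : ℂ))
      (fun z w v => by push_cast; ring)
      (fun r z v => by simp only [Complex.real_smul]; ring)
      (fun z v w => by push_cast [map_add]; ring)
      (fun r z v => by simp only [map_smul, smul_eq_mul, Complex.real_smul]; push_cast; ring))

private lemma dualExtAux_smulC (α : V →ₗ[ℝ] ℝ) (z : ℂ) (x : Cx V) :
    dualExtAux α (z • x) = z * dualExtAux α x := by
  induction x using TensorProduct.induction_on with
  | zero => simp
  | tmul w v =>
      simp only [dualExtAux, smul_tmul', lift.tmul, LinearMap.mk₂_apply, smul_eq_mul]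
      ring
  | add x y hx hy => simp only [smul_add, map_add, hx, hy]; ring

/-- The ℂ-linear extension of a real functional `α : V → ℝ` to `V_ℂ`. -/
def dualExtFun (α : V →ₗ[ℝ] ℝ) : DualC V where
  toFun := dualExtAux α
  map_add' := map_add _
  map_smul' z x := by simpa using dualExtAux_smulC α z x

private lemma dualExtFun_tmul (α : V →ₗ[ℝ] ℝ) (z : ℂ) (v : V) :
    dualExtFun α (z ⊗ₜ[ℝ] v) = z * (α v : ℂ) := by
  simp [dualExtFun, dualExtAux]

/-- The ℂ-linear extension map `V^* → (V_ℂ)^*`, as an ℝ-linear map. -/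
def dualExt : (V →ₗ[ℝ] ℝ) →ₗ[ℝ] DualC V where
  toFun := dualExtFun
  map_add' α β := by
    apply LinearMap.ext; intro x
    induction x using TensorProduct.induction_on with
    | zero => simp
    | tmul w v =>
        simp only [dualExtFun_tmul, LinearMap.add_apply]
        push_cast
        ring
    | add x y hx hy =>
        simp only [map_add, LinearMap.add_apply] at *
        rw [hx, hy]
  map_smul' r α := by
    apply LinearMap.ext; intro x
    induction x using TensorProduct.induction_on with
    | zero => simp
    | tmul w v =>
        simp only [dualExtFun_tmul, RingHom.id_apply, LinearMap.smul_apply,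
          LinearMap.smul_apply, smul_eq_mul, Complex.real_smul]
        push_cast
        ring
    | add x y hx hy =>
        simp only [map_add, RingHom.id_apply, LinearMap.smul_apply, smul_eq_mul] at *
        rw [hx, hy]

/-- The canonical inclusion `𝕋V → 𝕋_ℂV`. -/
def iT : TR V →ₗ[ℝ] TCx V where
  toFun a := (iV a.1, dualExt a.2)
  map_add' a b := by simp [Prod.ext_iff]
  map_smul' r a := by simp [Prod.ext_iff]



/-- Auxiliary ℝ-linear version of the ℂ-bilinear extension of a real bilinear form. -/
def bilinExtAux (B : V →ₗ[ℝ] V →ₗ[ℝ] ℝ) : Cx V →ₗ[ℝ] DualC V :=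
  TensorProduct.lift
    (LinearMap.mk₂ ℝ (fun z v => z • dualExt (B v))
      (fun z w v => by simp only [add_smul])
      (fun r z v => by simp only [smul_assoc])
      (fun z v w => by simp only [map_add, smul_add])
      (fun r z v => by simp only [map_smul]; exact smul_comm z r _))

private lemma bilinExtAux_smulC (B : V →ₗ[ℝ] V →ₗ[ℝ] ℝ) (z : ℂ) (x : Cx V) :
    bilinExtAux B (z • x) = z • bilinExtAux B x := by
  induction x using TensorProduct.induction_on with
  | zero => simp
  | tmul w v =>
      simp only [bilinExtAux, smul_tmul', lift.tmul, LinearMap.mk₂_apply, smul_eq_mul,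
        mul_smul]
  | add x y hx hy => simp only [smul_add, map_add, hx, hy]

/-- The ℂ-bilinear extension of a real bilinear form `B : V × V → ℝ` to `V_ℂ`. -/
def bilinExt (B : V →ₗ[ℝ] V →ₗ[ℝ] ℝ) : Cx V →ₗ[ℂ] DualC V where
  toFun := bilinExtAux B
  map_add' := map_add _
  map_smul' z x := by simpa using bilinExtAux_smulC B z x

/-- The `B`-transformation `e^B(X+ξ) = X + ξ + B̃(X,·)` of `𝕋_ℂV`, for a real `B`. -/
def eB (B : V →ₗ[ℝ] V →ₗ[ℝ] ℝ) : TCx V →ₗ[ℂ] TCx V where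
  toFun a := (a.1, a.2 + bilinExt B a.1)
  map_add' a b := by
    simp only [Prod.fst_add, Prod.snd_add, map_add, Prod.mk_add_mk, Prod.mk.injEq]
    exact ⟨trivial, by abel⟩
  map_smul' z a := by
    simp only [Prod.smul_fst, Prod.smul_snd, map_smul, RingHom.id_apply, Prod.smul_mk,
      Prod.mk.injEq, smul_add]

/-- The real `B`-transformation `e^B(X+α) = X + α + B(X,·)` of `𝕋V`. -/
def eBR (B : V →ₗ[ℝ] V →ₗ[ℝ] ℝ) : TR V →ₗ[ℝ] TR V where
  toFun a := (a.1, a.2 + B a.1)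
  map_add' a b := by
    simp only [Prod.fst_add, Prod.snd_add, map_add, Prod.mk_add_mk, Prod.mk.injEq]
    exact ⟨trivial, by abel⟩
  map_smul' r a := by
    simp only [Prod.smul_fst, Prod.smul_snd, map_smul, RingHom.id_apply, Prod.smul_mk,
      Prod.mk.injEq, smul_add]


/-- The range `E = pr_{V_ℂ}(L)` of a subspace of `𝕋_ℂV`. -/
def Esub (L : Submodule ℂ (TCx V)) : Submodule ℂ (Cx V) :=
  L.map (LinearMap.fst ℂ (Cx V) (DualC V))

/-- The real index `r = dim_ℂ (L ∩ L̄)`. -/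
def riL (L : Submodule ℂ (TCx V)) : ℕ := finrank ℂ ↥(L ⊓ conjSub L)

/-- The real part `K = (L ∩ L̄) ∩ 𝕋V`, as a subspace of `𝕋V`. -/
def Ksub (L : Submodule ℂ (TCx V)) : Submodule ℝ (TR V) :=
  ((L ⊓ conjSub L).restrictScalars ℝ).comap iT

/-- The distribution `D = (E + Ē) ∩ V`, as a subspace of `V`. -/
def Dsub (L : Submodule ℂ (TCx V)) : Submodule ℝ V :=
  ((Esub L ⊔ conjE (Esub L)).restrictScalars ℝ).comap iV

/-- The distribution `Δ = (E ∩ Ē) ∩ V`, as a subspace of `V`. -/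
def DeltaSub (L : Submodule ℂ (TCx V)) : Submodule ℝ V :=
  ((Esub L ⊓ conjE (Esub L)).restrictScalars ℝ).comap iV

/-- The order `s = dim V - dim D`. -/
def orderL (L : Submodule ℂ (TCx V)) : ℕ := finrank ℝ V - finrank ℝ ↥(Dsub L)

/-- The (normalized) type `k = dim_ℂ(E + Ē) - dim_ℂ E`. -/
def typeL (L : Submodule ℂ (TCx V)) : ℕ :=
  finrank ℂ ↥(Esub L ⊔ conjE (Esub L)) - finrank ℂ ↥(Esub L)


end CDirac

open CDirac Module

/-!
Everything is read off from real parts. A real `X + α` lies in `K` iff its complexification lies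
in `L`, i.e. `X ∈ E` and `α_ℂ = ε(X, ·)` on `E`. Such a real `α` exists iff `ε(X, ·)` is real on
`Δ`: a functional real on the real points of `E ∩ Ē` agrees there with its conjugate, so the two
glue to a functional on `E + Ē` whose real part does the job. This gives `pr_V(K) = Δ₀`.
For `pr_V(K^⊥) = D`: `K` contains every `(0, β)` with `β_ℂ|_E = 0`, which cuts `pr_V(K^⊥)` down
to `D`; conversely a point of `D` is the projection of the real part of an element of `L + L̄`,
and such an element, hence its real part, is orthogonal to `K ⊆ L ∩ L̄` since `L` is isotropic.
-/

theorem LinearMap.exists_eqOn_of_eqOn_inf {K W V' : Type*} [DivisionRing K] [AddCommGroup W]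
    [Module K W] [AddCommGroup V'] [Module K V'] {p q : Submodule K W} {f g : W →ₗ[K] V'}
    (h : Set.EqOn f g (p ⊓ q : Submodule K W)) :
    ∃ ψ : W →ₗ[K] V', Set.EqOn ψ f p ∧ Set.EqOn ψ g q := by
  let F : W →ₗ.[K] V' := ⟨p, f.domRestrict p⟩
  let G : W →ₗ.[K] V' := ⟨q, g.domRestrict q⟩
  have hFG : ∀ (x : F.domain) (y : G.domain), (x : W) = y → F x = G y := by
    rintro ⟨x, hx⟩ ⟨y, hy⟩ (rfl : x = y)
    exact h ⟨hx, hy⟩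
  obtain ⟨ψ, hψ⟩ := (F.sup G hFG).toFun.exists_extend
  refine ⟨ψ, fun x hx => ?_, fun x hx => ?_⟩
  · exact (congr($hψ ⟨x, le_sup_left (a := p) hx⟩)).trans
      ((F.left_le_sup G hFG).2 (x := ⟨x, hx⟩) rfl).symm
  · exact (congr($hψ ⟨x, le_sup_right (b := q) hx⟩)).trans
      ((F.right_le_sup G hFG).2 (x := ⟨x, hx⟩) rfl).symm

namespace CDirac

variable {V : Type*} [AddCommGroup V] [Module ℝ V]

lemma iV_apply (v : V) : iV v = (1 : ℂ) ⊗ₜ[ℝ] v := rfl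

lemma conjCx_tmul (z : ℂ) (v : V) : conjCx (z ⊗ₜ[ℝ] v) = starRingEnd ℂ z ⊗ₜ[ℝ] v := by
  simp [conjCx, Complex.conjAe_coe]

lemma conjCx_iV (v : V) : conjCx (iV v) = iV v := by
  simp [iV_apply, conjCx_tmul]

lemma conjCx_conjCx (x : Cx V) : conjCx (conjCx x) = x := by
  induction x using TensorProduct.induction_on with
  | zero => simp
  | tmul z v => simp [conjCx_tmul]
  | add x y hx hy => rw [map_add, map_add, hx, hy]

lemma mem_conjE {E : Submodule ℂ (Cx V)} {x : Cx V} : x ∈ conjE E ↔ conjCx x ∈ E :=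
  ⟨by rintro ⟨w, hw, rfl⟩; rwa [conjCx_conjCx], fun h => ⟨conjCx x, h, conjCx_conjCx x⟩⟩

def reCx : Cx V →ₗ[ℝ] V :=
  TensorProduct.lift
    (LinearMap.mk₂ ℝ (fun z v => z.re • v)
      (fun z w v => by simp [add_smul])
      (fun r z v => by rw [Complex.real_smul]; simp [Complex.mul_re, mul_smul])
      (fun z v w => by simp [smul_add])
      (fun r z v => smul_comm _ _ _))

lemma reCx_tmul (z : ℂ) (v : V) : reCx (z ⊗ₜ[ℝ] v) = z.re • v := rfl

lemma reCx_iV (v : V) : reCx (iV v) = v := by simp [iV_apply, reCx_tmul]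

lemma iV_reCx (x : Cx V) : iV (reCx x) = (2 : ℂ)⁻¹ • (x + conjCx x) := by
  induction x using TensorProduct.induction_on with
  | zero => simp
  | tmul z v =>
    rw [reCx_tmul, conjCx_tmul, iV_apply, tmul_smul, ← add_tmul, smul_tmul', smul_tmul']
    congr 1
    rw [Complex.real_smul, mul_one, Complex.re_eq_add_conj, smul_eq_mul, div_eq_inv_mul]
  | add x y hx hy => rw [map_add, map_add, hx, hy, map_add]; module

lemma iV_reCx_add_I_smul (x : Cx V) :
    iV (reCx x) + Complex.I • iV (reCx (-Complex.I • x)) = x := by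
  rw [iV_reCx, iV_reCx, conjCx_smul]
  simp only [map_neg, Complex.conj_I, neg_neg, smul_add, smul_smul]
  match_scalars
  · linear_combination (-1 / 2 : ℂ) * Complex.I_mul_I
  · linear_combination (1 / 2 : ℂ) * Complex.I_mul_I

lemma iV_reCx_mem {W : Submodule ℂ (Cx V)} (hW : ∀ x ∈ W, conjCx x ∈ W) {x : Cx V}
    (hx : x ∈ W) : iV (reCx x) ∈ W := by
  rw [iV_reCx]
  exact W.smul_mem _ (W.add_mem hx (hW x hx))

/-- A conjugation-stable subspace is spanned by its real points. -/
lemma eqOn_of_eqOn_iV {W : Submodule ℂ (Cx V)} (hW : ∀ x ∈ W, conjCx x ∈ W)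
    {f g : DualC V} (h : ∀ v, iV v ∈ W → f (iV v) = g (iV v)) : Set.EqOn f g W := by
  intro x hx
  have hre := iV_reCx_mem hW hx
  have him := iV_reCx_mem hW (W.smul_mem (-Complex.I) hx)
  rw [← iV_reCx_add_I_smul x, map_add, map_add, map_smul f, map_smul g, h _ hre, h _ him]

lemma ext_iV {f g : DualC V} (h : ∀ v, f (iV v) = g (iV v)) : f = g :=
  LinearMap.ext fun _ => eqOn_of_eqOn_iV (W := ⊤) (fun _ _ => trivial) (fun v _ => h v) trivial

lemma dualExt_tmul (β : V →ₗ[ℝ] ℝ) (z : ℂ) (v : V) :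
    dualExt β (z ⊗ₜ[ℝ] v) = z * (β v : ℂ) := by
  simp [dualExt, dualExtFun, dualExtAux]

lemma dualExt_iV (β : V →ₗ[ℝ] ℝ) (v : V) : dualExt β (iV v) = (β v : ℂ) := by
  rw [iV_apply, dualExt_tmul, one_mul]

lemma re_dualExt (β : V →ₗ[ℝ] ℝ) (x : Cx V) : (dualExt β x).re = β (reCx x) := by
  induction x using TensorProduct.induction_on with
  | zero => simp
  | tmul z v => simp [dualExt_tmul, reCx_tmul]
  | add x y hx hy => rw [map_add, Complex.add_re, hx, hy, map_add, map_add]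

lemma conjDual_apply (ξ : DualC V) (x : Cx V) :
    conjDual ξ x = starRingEnd ℂ (ξ (conjCx x)) := rfl

lemma conjDual_dualExt (β : V →ₗ[ℝ] ℝ) : conjDual (dualExt β) = dualExt β :=
  ext_iV fun v => by rw [conjDual_apply, conjCx_iV, dualExt_iV, Complex.conj_ofReal]

lemma conjT_iT (a : TR V) : conjT (iT a) = iT a :=
  Prod.ext (conjCx_iV a.1) (conjDual_dualExt a.2)

def reDual (ξ : DualC V) : V →ₗ[ℝ] ℝ := Complex.reLm ∘ₗ ξ.restrictScalars ℝ ∘ₗ iV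

lemma reDual_apply (ξ : DualC V) (v : V) : reDual ξ v = (ξ (iV v)).re := rfl

lemma dualExt_reDual (ξ : DualC V) : dualExt (reDual ξ) = (2 : ℂ)⁻¹ • (ξ + conjDual ξ) :=
  ext_iV fun v => by
    rw [dualExt_iV, reDual_apply, Complex.re_eq_add_conj, LinearMap.smul_apply,
      LinearMap.add_apply, conjDual_apply, conjCx_iV, smul_eq_mul, div_eq_inv_mul]

def reT (m : TCx V) : TR V := (reCx m.1, reDual m.2)

lemma pairR_reT (m : TCx V) (b : TR V) : pairR (reT m) b = (pairC m (iT b)).re := by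
  simp [pairR, pairC, reT, iT, reDual_apply, re_dualExt]

lemma pairC_conjT (a b : TCx V) : pairC (conjT a) (conjT b) = starRingEnd ℂ (pairC a b) := by
  simp only [pairC, conjT, LinearMap.coe_mk, AddHom.coe_mk, conjDual_apply, conjCx_conjCx,
    map_div₀, map_add, map_ofNat]

lemma IsLagrangianC.pairC_eq_zero {L : Submodule ℂ (TCx V)} (hL : IsLagrangianC L)
    {m n : TCx V} (hm : m ∈ L) (hn : n ∈ L) : pairC m n = 0 :=
  (show m ∈ orthC L from hL ▸ hm) n hn

lemma mem_Ksub {L : Submodule ℂ (TCx V)} {a : TR V} : a ∈ Ksub L ↔ iT a ∈ L :=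
  ⟨fun h => h.1, fun h => ⟨h, iT a, h, conjT_iT a⟩⟩

/-- Glue `φ` on `E` with its conjugate on `Ē` (they agree on `E ∩ Ē` because `φ` is real on
`Δ`) and take the real part of the glued functional. -/
lemma exists_dualExt_eqOn (E : Submodule ℂ (Cx V)) (φ : ↥E →ₗ[ℂ] ℂ)
    (hreal : ∀ (v : V) (hv : iV v ∈ E), iV v ∈ conjE E → (φ ⟨iV v, hv⟩).im = 0) :
    ∃ α : V →ₗ[ℝ] ℝ, ∀ (y : Cx V) (hy : y ∈ E), dualExt α y = φ ⟨y, hy⟩ := by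
  obtain ⟨ψ₁, hψ₁⟩ := LinearMap.exists_extend φ
  have hψ₁E : ∀ (y : Cx V) (hy : y ∈ E), ψ₁ y = φ ⟨y, hy⟩ := fun y hy => congr($hψ₁ ⟨y, hy⟩)
  have hsym : Set.EqOn ψ₁ (conjDual ψ₁) (E ⊓ conjE E : Submodule ℂ (Cx V)) := by
    refine eqOn_of_eqOn_iV (fun x hx => Submodule.mem_inf.mpr
      ⟨mem_conjE.mp hx.2, mem_conjE.mpr ((conjCx_conjCx x).symm ▸ hx.1)⟩) fun v hv => ?_
    rw [conjDual_apply, conjCx_iV, hψ₁E _ hv.1, Complex.conj_eq_iff_im.mpr (hreal v hv.1 hv.2)]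
  obtain ⟨ψ, hψE, hψEb⟩ := LinearMap.exists_eqOn_of_eqOn_inf hsym
  refine ⟨reDual ψ, fun y hy => ?_⟩
  have hconj : conjDual ψ y = ψ₁ y := by
    rw [conjDual_apply, hψEb (mem_conjE.mpr ((conjCx_conjCx y).symm ▸ hy)), conjDual_apply,
      conjCx_conjCx, Complex.conj_conj]
  rw [dualExt_reDual, LinearMap.smul_apply, LinearMap.add_apply, hconj, hψE hy, hψ₁E y hy]
  module

section Presentation

variable {L : Submodule ℂ (TCx V)} {E : Submodule ℂ (Cx V)} {ε : ↥E →ₗ[ℂ] ↥E →ₗ[ℂ] ℂ}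

lemma exists_mem_fst_eq
    (hchar : ∀ a : TCx V, a ∈ L ↔ ∃ h : a.1 ∈ E, ∀ y : ↥E, a.2 ↑y = ε ⟨a.1, h⟩ y)
    {x : Cx V} (hx : x ∈ E) : ∃ ℓ ∈ L, ℓ.1 = x :=
  ⟨(x, Subspace.dualLift E (ε ⟨x, hx⟩)), (hchar _).mpr ⟨hx, Subspace.dualLift_of_subtype⟩, rfl⟩

/-- If `X ∉ E + Ē`, a real covector `β` with `β_ℂ|_E = 0` and `β X = 1` gives `(0, β) ∈ K`
pairing nontrivially with every `X + α`. -/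
lemma iV_mem_sup_of_mem_orthR
    (hchar : ∀ a : TCx V, a ∈ L ↔ ∃ h : a.1 ∈ E, ∀ y : ↥E, a.2 ↑y = ε ⟨a.1, h⟩ y)
    {a : TR V} (ha : a ∈ orthR (Ksub L)) : iV a.1 ∈ E ⊔ conjE E := by
  by_contra hX
  obtain ⟨ξ, hξW, hξX⟩ := LinearMap.exists_extend_of_notMem (0 : ↥(E ⊔ conjE E) →ₗ[ℂ] ℂ) hX 1
  have hξ : ∀ y ∈ E ⊔ conjE E, ξ y = 0 := fun y hy => congr($hξW ⟨y, hy⟩)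
  have hβ : ∀ y ∈ E, dualExt (reDual ξ) y = 0 := fun y hy => by
    rw [dualExt_reDual, LinearMap.smul_apply, LinearMap.add_apply, conjDual_apply,
      hξ y (Submodule.mem_sup_left hy),
      hξ _ (Submodule.mem_sup_right (Submodule.mem_map_of_mem hy))]
    simp
  have hK : ((0 : V), reDual ξ) ∈ Ksub L := by
    have h0 : iT ((0 : V), reDual ξ) = (0, dualExt (reDual ξ)) := Prod.ext (map_zero iV) rfl
    rw [mem_Ksub, h0, hchar]
    exact ⟨E.zero_mem, fun y => (hβ y y.2).trans (LinearMap.congr_fun (map_zero ε) y).symm⟩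
  have := ha _ hK
  simp [pairR, reDual_apply, hξX] at this

lemma exists_mem_orthR_of_iV_mem_sup (hL : IsLagrangianC L)
    (hchar : ∀ a : TCx V, a ∈ L ↔ ∃ h : a.1 ∈ E, ∀ y : ↥E, a.2 ↑y = ε ⟨a.1, h⟩ y)
    {X : V} (hX : iV X ∈ E ⊔ conjE E) : ∃ α, (X, α) ∈ orthR (Ksub L) := by
  obtain ⟨e, he, _, ⟨f, hf, rfl⟩, hef⟩ := Submodule.mem_sup.mp hX
  obtain ⟨ℓe, hℓe, rfl⟩ := exists_mem_fst_eq hchar he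
  obtain ⟨ℓf, hℓf, rfl⟩ := exists_mem_fst_eq hchar hf
  have hreT : reT (ℓe + conjT ℓf) = (X, (reT (ℓe + conjT ℓf)).2) :=
    Prod.ext ((congrArg reCx hef).trans (reCx_iV X)) rfl
  refine ⟨(reT (ℓe + conjT ℓf)).2, fun b hb => ?_⟩
  have hbL : iT b ∈ L := mem_Ksub.mp hb
  rw [← hreT, pairR_reT, pairC_add_left, ← conjT_iT b, pairC_conjT, conjT_iT,
    hL.pairC_eq_zero hℓe hbL, hL.pairC_eq_zero hℓf hbL]
  simp

lemma fst_mem_Delta0_of_mem_Ksub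
    (hchar : ∀ a : TCx V, a ∈ L ↔ ∃ h : a.1 ∈ E, ∀ y : ↥E, a.2 ↑y = ε ⟨a.1, h⟩ y)
    {a : TR V} (ha : a ∈ Ksub L) :
    ∃ (h1 : iV a.1 ∈ E) (_ : iV a.1 ∈ conjE E), ∀ (Y : V) (g1 : iV Y ∈ E) (_ : iV Y ∈ conjE E),
      (ε ⟨iV a.1, h1⟩ ⟨iV Y, g1⟩).im = 0 := by
  obtain ⟨h1, hα⟩ : ∃ h : iV a.1 ∈ E, ∀ y : ↥E, dualExt a.2 y = ε ⟨iV a.1, h⟩ y :=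
    (hchar _).mp (mem_Ksub.mp ha)
  refine ⟨h1, mem_conjE.mpr ((conjCx_iV a.1).symm ▸ h1), fun Y g1 _ => ?_⟩
  rw [← hα ⟨iV Y, g1⟩]
  exact (congrArg Complex.im (dualExt_iV a.2 Y)).trans (Complex.ofReal_im _)

lemma exists_mem_Ksub_of_im_eq_zero
    (hchar : ∀ a : TCx V, a ∈ L ↔ ∃ h : a.1 ∈ E, ∀ y : ↥E, a.2 ↑y = ε ⟨a.1, h⟩ y)
    {X : V} (h1 : iV X ∈ E)
    (him : ∀ (Y : V) (g1 : iV Y ∈ E), iV Y ∈ conjE E → (ε ⟨iV X, h1⟩ ⟨iV Y, g1⟩).im = 0) :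
    ∃ α, (X, α) ∈ Ksub L := by
  obtain ⟨α, hα⟩ := exists_dualExt_eqOn E (ε ⟨iV X, h1⟩) him
  exact ⟨α, mem_Ksub.mpr ((hchar _).mpr ⟨h1, fun y => hα y y.2⟩)⟩

end Presentation

end CDirac

theorem stmt7_general (V : Type*) [AddCommGroup V] [Module ℝ V]
    (L : Submodule ℂ (TCx V)) (hL : IsLagrangianC L)
    (E : Submodule ℂ (Cx V))
    (ε : ↥E →ₗ[ℂ] ↥E →ₗ[ℂ] ℂ)
    (hchar : ∀ a : TCx V, a ∈ L ↔ ∃ h : a.1 ∈ E, ∀ y : ↥E, a.2 ↑y = ε ⟨a.1, h⟩ y)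
    (K : Submodule ℝ (TR V)) (hK : K = Ksub L)
    (D : Submodule ℝ V) (hD : D = ((E ⊔ conjE E).restrictScalars ℝ).comap iV) :
    (orthR K).map (LinearMap.fst ℝ V (V →ₗ[ℝ] ℝ)) = D ∧
    ((K.map (LinearMap.fst ℝ V (V →ₗ[ℝ] ℝ)) : Set V) =
      {X : V | ∃ (h1 : iV X ∈ E) (_ : iV X ∈ conjE E),
        ∀ (Y : V) (g1 : iV Y ∈ E) (_ : iV Y ∈ conjE E),
          (ε ⟨iV X, h1⟩ ⟨iV Y, g1⟩).im = 0}) := by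
  subst hK hD
  refine ⟨le_antisymm ?_ fun X hX => ?_, Set.ext fun X => ⟨?_, ?_⟩⟩
  · rintro _ ⟨a, ha, rfl⟩
    exact iV_mem_sup_of_mem_orthR hchar ha
  · obtain ⟨α, hα⟩ := exists_mem_orthR_of_iV_mem_sup hL hchar hX
    exact ⟨(X, α), hα, rfl⟩
  · rintro ⟨a, ha, rfl⟩
    exact fst_mem_Delta0_of_mem_Ksub hchar ha
  · rintro ⟨h1, -, him⟩
    obtain ⟨α, hα⟩ := exists_mem_Ksub_of_im_eq_zero hchar h1 him
    exact ⟨(X, α), hα, rfl⟩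

/-- For a lagrangian `L = L(E,ε) ⊆ 𝕋_ℂV`, with `K` the real part of
`L ∩ L̄`, one has `pr_V(K^⊥) = D = (E+Ē) ∩ V` and
`pr_V(K) = Δ₀ = ker (Im ε|_{Δ×Δ}) ⊆ Δ = (E∩Ē) ∩ V`. -/
theorem stmt7 (V : Type*) [AddCommGroup V] [Module ℝ V] [FiniteDimensional ℝ V]
    (L : Submodule ℂ (TCx V)) (hL : IsLagrangianC L)
    (E : Submodule ℂ (Cx V)) (hE : E = Esub L)
    (ε : ↥E →ₗ[ℂ] ↥E →ₗ[ℂ] ℂ) (halt : ∀ x : ↥E, ε x x = 0)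
    (hchar : ∀ a : TCx V, a ∈ L ↔ ∃ h : a.1 ∈ E, ∀ y : ↥E, a.2 ↑y = ε ⟨a.1, h⟩ y)
    (K : Submodule ℝ (TR V)) (hK : K = Ksub L)
    (D : Submodule ℝ V) (hD : D = ((E ⊔ conjE E).restrictScalars ℝ).comap iV) :
    (orthR K).map (LinearMap.fst ℝ V (V →ₗ[ℝ] ℝ)) = D ∧
    ((K.map (LinearMap.fst ℝ V (V →ₗ[ℝ] ℝ)) : Set V) =
      {X : V | ∃ (h1 : iV X ∈ E) (_ : iV X ∈ conjE E),
        ∀ (Y : V) (g1 : iV Y ∈ E) (_ : iV Y ∈ conjE E),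
          (ε ⟨iV X, h1⟩ ⟨iV Y, g1⟩).im = 0}) :=
  stmt7_general V L hL E ε hchar K hK D hD
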